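/- arXiv:2203.14833 — 2 statements merged into one kernel-verified Lean document; each statement's English description precedes it below -/
import Mathlib

section
/- The function u(x) = sin(λ|x|)/(λ|x|) (extended by 1 at the origin) on ℝ³ satisfies the volume mean value identity: for every r > 0, the average of u over the ball B_r(0) equals u(0) · a(λr), where a(t) = 3(sin t − t cos t)/t³. -/
set_option maxHeartbeats 1000000


open Real MeasureTheory Metric Classical

theorem stmt_1 (lam r : ℝ) (hlam : 0 < lam) (hr : 0 < r)
    (u : EuclideanSpace ℝ (Fin 3) → ℝ)
    (hu : ∀ x, u x = if x = 0 then 1 else Real.sin (lam * ‖x‖) / (lam * ‖x‖)) :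
    ⨍ y in ball (0 : EuclideanSpace ℝ (Fin 3)) r, u y =
      u 0 * (3 * (Real.sin (lam * r) - lam * r * Real.cos (lam * r)) / (lam * r) ^ 3) := by
  set f : ℝ → ℝ := fun t => if t < r then Real.sin (lam * t) / (lam * t) else 0 with hf
  -- Step 1: integral over ball equals integral of f ∘ norm over the whole space
  have h0 : ∀ᵐ x : EuclideanSpace ℝ (Fin 3), x ≠ 0 := by
    rw [ae_iff]
    have : {x : EuclideanSpace ℝ (Fin 3) | ¬ x ≠ 0} = {0} := by ext x; simp
    rw [this]
    exact measure_singleton 0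
  have step1 : ∫ y in ball (0 : EuclideanSpace ℝ (Fin 3)) r, u y = ∫ x : EuclideanSpace ℝ (Fin 3), f ‖x‖ := by
    rw [← integral_indicator measurableSet_ball]
    refine integral_congr_ae ?_
    filter_upwards [h0] with x hx
    rw [Set.indicator_apply]
    by_cases hxr : x ∈ ball (0 : EuclideanSpace ℝ (Fin 3)) r
    · rw [if_pos hxr, hu x, if_neg hx, hf]
      simp only [mem_ball, dist_zero_right] at hxr
      simp [if_pos hxr]
    · rw [if_neg hxr, hf]
      simp only [mem_ball, dist_zero_right, not_lt] at hxr
      simp [not_lt.2 hxr]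
  -- Step 2: spherical coordinates
  have hdim : Module.finrank ℝ (EuclideanSpace ℝ (Fin 3)) = 3 := finrank_euclideanSpace_fin
  have step2 := MeasureTheory.integral_fun_norm_addHaar (volume : Measure (EuclideanSpace ℝ (Fin 3))) f
  rw [hdim] at step2
  -- Step 3: radial integral
  have step3 : ∫ y in Set.Ioi (0 : ℝ), y ^ (3 - 1) • f y
      = ∫ y in (0 : ℝ)..r, y * Real.sin (lam * y) / lam := by
    rw [intervalIntegral.integral_of_le hr.le, integral_Ioc_eq_integral_Ioo,
      ← integral_indicator measurableSet_Ioi, ← integral_indicator measurableSet_Ioo]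
    refine integral_congr_ae (Filter.Eventually.of_forall fun y => ?_)
    rw [Set.indicator_apply, Set.indicator_apply]
    simp only [Set.mem_Ioi, Set.mem_Ioo]
    by_cases hy : 0 < y
    · rw [if_pos hy]
      by_cases hyr : y < r
      · rw [if_pos ⟨hy, hyr⟩, hf]
        simp only [if_pos hyr, smul_eq_mul]
        field_simp
      · rw [if_neg (by simp [hyr]), hf]
        simp [hyr]
    · rw [if_neg hy, if_neg (by simp [hy])]
  have step4 : ∫ y in (0 : ℝ)..r, y * Real.sin (lam * y) / lam
      = (Real.sin (lam * r) - lam * r * Real.cos (lam * r)) / lam ^ 3 := by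
    have key : ∀ y ∈ Set.uIcc (0 : ℝ) r,
        HasDerivAt (fun t => (Real.sin (lam * t) - lam * t * Real.cos (lam * t)) / lam ^ 3)
          (y * Real.sin (lam * y) / lam) y := by
      intro y _
      have h1 : HasDerivAt (fun t => Real.sin (lam * t)) (lam * Real.cos (lam * y)) y := by
        simpa [mul_comm, Function.comp_def] using (Real.hasDerivAt_sin (lam * y)).comp y
          ((hasDerivAt_id y).const_mul lam)
      have h2 : HasDerivAt (fun t => Real.cos (lam * t)) (-(lam * Real.sin (lam * y))) y := by
        simpa [mul_comm, Function.comp_def] using (Real.hasDerivAt_cos (lam * y)).comp y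
          ((hasDerivAt_id y).const_mul lam)
      have h3 : HasDerivAt (fun t => lam * t * Real.cos (lam * t))
          (lam * Real.cos (lam * y) + lam * y * (-(lam * Real.sin (lam * y)))) y := by
        simpa [Pi.mul_def] using ((hasDerivAt_id y).const_mul lam).mul h2
      have h4 := (h1.sub h3).div_const (lam ^ 3)
      refine h4.congr_deriv ?_
      rw [div_eq_div_iff (by positivity) hlam.ne']
      ring
    rw [intervalIntegral.integral_eq_sub_of_hasDerivAt key ?_]
    · simp [hlam.ne']
    · exact ((continuous_id.mul (Real.continuous_sin.comp
        (continuous_const.mul continuous_id))).div_const lam).intervalIntegrable _ _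
  -- volume of the ball
  have hvol : (volume (ball (0 : EuclideanSpace ℝ (Fin 3)) r)).toReal
      = r ^ 3 * (volume (ball (0 : EuclideanSpace ℝ (Fin 3)) 1)).toReal := by
    rw [Measure.addHaar_ball volume (0 : EuclideanSpace ℝ (Fin 3)) hr.le, hdim, ENNReal.toReal_mul,
      ENNReal.toReal_ofReal (by positivity)]
  have hv1pos : 0 < (volume (ball (0 : EuclideanSpace ℝ (Fin 3)) 1)).toReal :=
    ENNReal.toReal_pos (measure_ball_pos volume _ one_pos).ne' measure_ball_lt_top.ne
  rw [setAverage_eq, step1, step2, step3, step4, hu 0, if_pos rfl, smul_eq_mul, measureReal_def, measureReal_def, hvol]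
  simp only [smul_eq_mul, nsmul_eq_mul]
  field_simp
  ring
end

section
/- Characterization of balls in ℝ³ via the Helmholtz mean value identity (restricted form): Let D ⊂ ℝ³ be a bounded measurable set with |D| = |B_r(0)|, contained in B_{r₀}(0) with λr₀ ≤ π. If the mean value identity (1/|D|)∫_D U(y) dy = a(λr) holds for the radial solution U(y) = sin(λ|y|)/(λ|y|), where a(t) = 3(sin t − t cos t)/t³, then D coincides with B_r(0) up to a set of measure zero. -/
open Real MeasureTheory Metric Classical

lemma aux1_stmt4 {t : ℝ} (h0 : 0 < t) (hpi : t ≤ π) : t * Real.cos t < Real.sin t := by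
  have key : StrictMonoOn (fun t : ℝ => Real.sin t - t * Real.cos t) (Set.Icc 0 π) := by
    apply strictMonoOn_of_deriv_pos (convex_Icc 0 π)
    · fun_prop
    · intro x hx
      rw [interior_Icc] at hx
      have hd : HasDerivAt (fun t : ℝ => Real.sin t - t * Real.cos t)
          (Real.cos x - (1 * Real.cos x + x * (-Real.sin x))) x :=
        (Real.hasDerivAt_sin x).sub ((hasDerivAt_id x).mul (Real.hasDerivAt_cos x))
      rw [hd.deriv]
      have := Real.sin_pos_of_pos_of_lt_pi hx.1 hx.2
      nlinarith [mul_pos hx.1 this]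
  have := key (Set.mem_Icc.2 ⟨le_refl 0, Real.pi_pos.le⟩) (Set.mem_Icc.2 ⟨h0.le, hpi⟩) h0
  simp at this
  linarith

lemma aux2_stmt4 {a b : ℝ} (ha : 0 < a) (hab : a < b) (hb : b ≤ π) :
    Real.sin b / b < Real.sin a / a := by
  have key : StrictAntiOn (fun t : ℝ => Real.sin t / t) (Set.Icc a b) := by
    apply strictAntiOn_of_deriv_neg (convex_Icc a b)
    · apply ContinuousOn.div (Real.continuous_sin.continuousOn) continuousOn_id
      intro x hx; exact ne_of_gt (lt_of_lt_of_le ha hx.1)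
    · intro x hx
      rw [interior_Icc] at hx
      have hx0 : 0 < x := ha.trans hx.1
      have hd : HasDerivAt (fun t : ℝ => Real.sin t / t)
          ((Real.cos x * x - Real.sin x * 1) / x ^ 2) x :=
        (Real.hasDerivAt_sin x).div (hasDerivAt_id x) hx0.ne'
      rw [hd.deriv]
      have h1 : x * Real.cos x < Real.sin x := aux1_stmt4 hx0 (hx.2.le.trans hb)
      apply div_neg_of_neg_of_pos (by linarith) (by positivity)
  simpa using key (Set.mem_Icc.2 ⟨le_refl a, hab.le⟩) (Set.mem_Icc.2 ⟨hab.le, le_refl b⟩) hab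

theorem stmt_4 (lam r r0 : ℝ) (hlam : 0 < lam) (hr : 0 < r) (hrr0 : r ≤ r0)
    (hsize : lam * r0 ≤ Real.pi)
    (D : Set (EuclideanSpace ℝ (Fin 3))) (hD : MeasurableSet D)
    (hDsub : D ⊆ ball (0 : EuclideanSpace ℝ (Fin 3)) r0)
    (hvol : volume D = volume (ball (0 : EuclideanSpace ℝ (Fin 3)) r))
    (U : EuclideanSpace ℝ (Fin 3) → ℝ)
    (hU : ∀ y, U y = if y = 0 then 1 else Real.sin (lam * ‖y‖) / (lam * ‖y‖))
    (hmean : ∫ y in D, U y =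
      (volume D).toReal *
        (3 * (Real.sin (lam * r) - lam * r * Real.cos (lam * r)) / (lam * r) ^ 3)) :
    volume (symmDiff D (ball (0 : EuclideanSpace ℝ (Fin 3)) r)) = 0 := by
  classical
  set B : Set (EuclideanSpace ℝ (Fin 3)) := ball (0 : EuclideanSpace ℝ (Fin 3)) r with hB
  set G : ℝ → ℝ := fun t => if t = 0 then 1 else Real.sin (lam * t) / (lam * t) with hG
  have hGne : ∀ t : ℝ, t ≠ 0 → G t = Real.sin (lam * t) / (lam * t) := by
    intro t ht; simp only [hG]; rw [if_neg ht]
  have hG0 : G 0 = 1 := by simp [hG]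
  have hGU : ∀ y : EuclideanSpace ℝ (Fin 3), U y = G ‖y‖ := by
    intro y
    rw [hU y]
    by_cases hy : y = 0
    · simp [hy, hG0]
    · rw [if_neg hy, hGne _ (by simpa [norm_eq_zero] using hy)]
  have hrpi : lam * r ≤ π := le_trans (by nlinarith) hsize
  have hlt : ∀ s : ℝ, 0 ≤ s → s < r → G r < G s := by
    intro s hs0 hsr
    rcases eq_or_lt_of_le hs0 with h | h
    · rw [← h, hG0, hGne r hr.ne']
      exact (div_lt_one (by positivity)).2 (Real.sin_lt (by positivity))
    · rw [hGne r hr.ne', hGne s h.ne']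
      exact aux2_stmt4 (by positivity) (by nlinarith) hrpi
  have hle : ∀ s : ℝ, r ≤ s → s ≤ r0 → G s ≤ G r := by
    intro s hrs hsr0
    rcases eq_or_lt_of_le hrs with h | h
    · rw [← h]
    · rw [hGne r hr.ne', hGne s (by linarith : (0:ℝ) < s).ne']
      exact (aux2_stmt4 (by positivity) (by nlinarith)
        (le_trans (by nlinarith) hsize)).le
  -- integrability
  have hUmeas : Measurable U := by
    have : U = fun y : EuclideanSpace ℝ (Fin 3) =>
        if y = 0 then 1 else Real.sin (lam * ‖y‖) / (lam * ‖y‖) := by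
      ext y; exact hU y
    rw [this]
    exact Measurable.ite (MeasurableSet.singleton 0) measurable_const
      ((measurable_const.mul measurable_norm).sin.div (measurable_const.mul measurable_norm))
  have hUbd : ∀ y : EuclideanSpace ℝ (Fin 3), ‖U y‖ ≤ 1 := by
    intro y
    rw [hU y]
    by_cases hy : y = 0
    · simp [hy]
    · rw [if_neg hy]
      have hn : 0 < lam * ‖y‖ := by
        have := norm_pos_iff.2 hy; positivity
      rw [Real.norm_eq_abs, abs_div, div_le_one (by rwa [abs_of_pos hn])]
      exact Real.abs_sin_le_abs
  have hInt : ∀ S : Set (EuclideanSpace ℝ (Fin 3)), volume S ≠ ⊤ → IntegrableOn U S := by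
    intro S hS
    exact Measure.integrableOn_of_bounded hS hUmeas.aestronglyMeasurable
      (Filter.Eventually.of_forall hUbd)
  have hDfin : volume D ≠ ⊤ := by
    rw [hvol]; exact measure_ball_lt_top.ne
  have hBfin : volume B ≠ ⊤ := measure_ball_lt_top.ne
  -- ball integral
  have hball : ∫ y in B, U y =
      3 * (volume (ball (0:EuclideanSpace ℝ (Fin 3)) 1)).toReal *
        ((Real.sin (lam * r) - lam * r * Real.cos (lam * r)) / lam ^ 3) := by
    set f : ℝ → ℝ := fun t => if t < r then G t else 0 with hf
    have h1 : ∫ y in B, U y = ∫ y : EuclideanSpace ℝ (Fin 3), f ‖y‖ := by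
      rw [← integral_indicator measurableSet_ball]
      congr 1
      ext y
      by_cases hy : ‖y‖ < r
      · simp only [Set.indicator, hB, mem_ball_zero_iff, hy, if_pos, hf, hGU y]
      · simp [Set.indicator, hB, mem_ball_zero_iff, hy, hf]
    rw [h1, integral_fun_norm_addHaar (volume : Measure (EuclideanSpace ℝ (Fin 3))) f]
    simp only [finrank_euclideanSpace, Fintype.card_fin, smul_eq_mul, nsmul_eq_mul]
    have h2 : ∫ y in Set.Ioi (0:ℝ), y ^ (3-1) * f y
        = ∫ y in Set.Ioc (0:ℝ) r, y * Real.sin (lam * y) / lam := by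
      rw [integral_Ioc_eq_integral_Ioo]
      have heq : ∀ y ∈ Set.Ioi (0:ℝ), y ^ (3-1) * f y
          = (Set.Iio r).indicator (fun y => y * Real.sin (lam * y) / lam) y := by
        intro y hy
        have hy0 : y ≠ 0 := ne_of_gt hy
        by_cases h : y < r
        · simp only [Set.indicator, Set.mem_Iio, h, if_pos, hf, hGne y hy0]
          field_simp
        · simp [Set.indicator, h, hf]
      rw [setIntegral_congr_fun measurableSet_Ioi heq, setIntegral_indicator measurableSet_Iio]
      congr 1
    have h3 : ∫ y in Set.Ioc (0:ℝ) r, y * Real.sin (lam * y) / lam =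
        (Real.sin (lam * r) - lam * r * Real.cos (lam * r)) / lam ^ 3 := by
      rw [← intervalIntegral.integral_of_le hr.le]
      have key : ∀ x ∈ Set.uIcc (0:ℝ) r, HasDerivAt
          (fun y => (Real.sin (lam * y) - lam * y * Real.cos (lam * y)) / lam ^ 3)
          (x * Real.sin (lam * x) / lam) x := by
        intro x _
        have hd1 : HasDerivAt (fun y : ℝ => lam * y) lam x := by
          simpa using (hasDerivAt_id x).const_mul lam
        have hs : HasDerivAt (fun y : ℝ => Real.sin (lam * y)) (Real.cos (lam * x) * lam) x :=
          (Real.hasDerivAt_sin (lam * x)).comp x hd1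
        have hc : HasDerivAt (fun y : ℝ => Real.cos (lam * y)) (-Real.sin (lam * x) * lam) x :=
          (Real.hasDerivAt_cos (lam * x)).comp x hd1
        have hd2 : HasDerivAt (fun y : ℝ => lam * y * Real.cos (lam * y))
            (lam * Real.cos (lam * x) + lam * x * (-Real.sin (lam * x) * lam)) x := by
          simpa using hd1.fun_mul hc
        have := (hs.fun_sub hd2).div_const (lam ^ 3)
        refine this.congr_deriv ?_
        rw [div_eq_div_iff (by positivity) hlam.ne']
        ring
      rw [intervalIntegral.integral_eq_sub_of_hasDerivAt key
        ((Continuous.intervalIntegrable (by fun_prop)) 0 r)]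
      simp
    rw [h2, h3]
    push_cast
    simp only [measureReal_def]
    ring
  have hvolB : (volume B).toReal
      = r ^ 3 * (volume (ball (0:EuclideanSpace ℝ (Fin 3)) 1)).toReal := by
    rw [hB, Measure.addHaar_ball volume (0:EuclideanSpace ℝ (Fin 3)) hr.le,
      ENNReal.toReal_mul, ENNReal.toReal_ofReal (by positivity)]
    norm_num [finrank_euclideanSpace]
  have hmean' : ∫ y in D, U y = ∫ y in B, U y := by
    rw [hmean, hvol, hball, hvolB]
    field_simp
  -- splitting
  have hIntD : IntegrableOn U D := hInt D hDfin
  have hIntB : IntegrableOn U B := hInt B hBfin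
  have hABfin : volume (D \ B) ≠ ⊤ := (lt_of_le_of_lt (measure_mono Set.diff_subset)
    (lt_top_iff_ne_top.2 hDfin)).ne
  have hBAfin : volume (B \ D) ≠ ⊤ := (lt_of_le_of_lt (measure_mono Set.diff_subset)
    (lt_top_iff_ne_top.2 hBfin)).ne
  have hmeasB : MeasurableSet B := measurableSet_ball
  have hsplitD : ∫ y in D, U y = (∫ y in D ∩ B, U y) + ∫ y in D \ B, U y := by
    have hdisj : Disjoint (D ∩ B) (D \ B) :=
      Set.disjoint_sdiff_right.mono_left Set.inter_subset_right
    have := setIntegral_union hdisj (hD.diff hmeasB)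
      (hIntD.mono_set Set.inter_subset_left) (hIntD.mono_set Set.diff_subset)
    rw [Set.inter_union_diff] at this
    exact this
  have hsplitB : ∫ y in B, U y = (∫ y in D ∩ B, U y) + ∫ y in B \ D, U y := by
    have hdisj : Disjoint (D ∩ B) (B \ D) :=
      Set.disjoint_sdiff_right.mono_left Set.inter_subset_left
    have := setIntegral_union hdisj (hmeasB.diff hD)
      (hIntB.mono_set Set.inter_subset_right) (hIntB.mono_set Set.diff_subset)
    rw [Set.inter_comm D B, Set.inter_union_diff] at this
    rw [this, Set.inter_comm]
  have hAeqC : volume (D \ B) = volume (B \ D) := by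
    have h1 := measure_inter_add_diff (μ := volume) D hmeasB
    have h2 := measure_inter_add_diff (μ := volume) B hD
    rw [Set.inter_comm] at h2
    have hfin : volume (D ∩ B) ≠ ⊤ := (lt_of_le_of_lt (measure_mono Set.inter_subset_left)
      (lt_top_iff_ne_top.2 hDfin)).ne
    have h3 : volume (D ∩ B) + volume (D \ B) = volume (D ∩ B) + volume (B \ D) := by
      rw [h1, h2, hvol]
    exact (ENNReal.add_right_inj hfin).1 h3
  have hIeq : ∫ y in D \ B, U y = ∫ y in B \ D, U y := by
    have h := hmean'
    rw [hsplitD, hsplitB] at h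
    linarith
  have hCzero : volume (B \ D) = 0 := by
    by_contra hC
    have hCpos : 0 < volume (B \ D) := pos_iff_ne_zero.2 hC
    have hup : ∫ y in D \ B, U y ≤ G r * (volume (D \ B)).toReal := by
      calc ∫ y in D \ B, U y ≤ ∫ _ in D \ B, G r := by
            apply setIntegral_mono_on (hIntD.mono_set Set.diff_subset)
              (integrableOn_const hABfin) (hD.diff hmeasB)
            intro y hy
            rw [hGU y]
            have hyr : r ≤ ‖y‖ := by
              by_contra h
              exact hy.2 (mem_ball_zero_iff.2 (lt_of_not_ge h))
            exact hle ‖y‖ hyr (mem_ball_zero_iff.1 (hDsub hy.1)).le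
        _ = G r * (volume (D \ B)).toReal := by
            rw [setIntegral_const, smul_eq_mul, mul_comm, measureReal_def]
    have hlow : G r * (volume (B \ D)).toReal < ∫ y in B \ D, U y := by
      have hintU : IntegrableOn U (B \ D) := hIntB.mono_set Set.diff_subset
      have hintc : IntegrableOn (fun _ : EuclideanSpace ℝ (Fin 3) => G r) (B \ D) :=
        integrableOn_const hBAfin
      have hpos : 0 < ∫ y in B \ D, (U y - G r) := by
        have hnn : 0 ≤ᵐ[volume.restrict (B \ D)] fun y => U y - G r := by
          apply (ae_restrict_iff' (hmeasB.diff hD)).2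
          apply Filter.Eventually.of_forall
          intro y hy
          have h1 : G r < G ‖y‖ := hlt ‖y‖ (norm_nonneg y) (mem_ball_zero_iff.1 hy.1)
          show (0:ℝ) ≤ U y - G r
          rw [hGU y]; linarith
        rw [setIntegral_pos_iff_support_of_nonneg_ae hnn (hintU.sub hintc)]
        have hsub : B \ D ⊆ Function.support (fun y => U y - G r) := by
          intro y hy
          have h1 : G r < G ‖y‖ := hlt ‖y‖ (norm_nonneg y) (mem_ball_zero_iff.1 hy.1)
          show U y - G r ≠ 0
          rw [hGU y]
          intro h; rw [sub_eq_zero] at h; rw [h] at h1; exact lt_irrefl _ h1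
        calc 0 < volume (B \ D) := hCpos
          _ ≤ volume (Function.support (fun y => U y - G r) ∩ (B \ D)) := by
              apply measure_mono
              exact Set.subset_inter hsub (le_refl _)
      rw [integral_sub hintU hintc, setIntegral_const, smul_eq_mul, measureReal_def] at hpos
      linarith
    rw [hIeq, hAeqC] at hup
    linarith
  have hAzero : volume (D \ B) = 0 := by rw [hAeqC, hCzero]
  rw [Set.symmDiff_def]
  exact measure_union_null hAzero hCzero
end
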